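/- arXiv:1510.09106 — 3 statements merged into one kernel-verified Lean document; each statement's English description precedes it below -/
import Mathlib

section
/- For 0 < α₁ < α₂ < 1, the function g(x) = (-ln x)^(α₂-α₁) · exp((-ln x)^(α₁) - (-ln x)^(α₂)) is strictly decreasing on the interval (1/e, 1). -/
open Real Set

/-! With `t = -log x`, which decreases from `1` to `0` on `(1/e, 1)`, it suffices that
`h t = t ^ (α₂ - α₁) * exp (t ^ α₁ - t ^ α₂)` increases on `[0, 1]`. Its derivative is
`t ^ (α₂ - α₁ - 1) * exp (…) * (α₂ (1 - t ^ α₂) - α₁ (1 - t ^ α₁))`, and the last factor is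
positive for `0 < t < 1` because `α₁ < α₂` and `0 < 1 - t ^ α₁ < 1 - t ^ α₂`. -/

lemma mul_one_sub_rpow_lt_mul_one_sub_rpow {a b t : ℝ} (ha : 0 ≤ a) (hab : a < b)
    (ht₀ : 0 < t) (ht₁ : t < 1) : a * (1 - t ^ a) < b * (1 - t ^ b) := by
  have hba : t ^ b < t ^ a := rpow_lt_rpow_of_exponent_gt ht₀ ht₁ hab
  have ha1 : t ^ a ≤ 1 := rpow_le_one ht₀.le ht₁.le ha
  nlinarith

lemma hasDerivAt_rpow_sub_mul_exp_rpow_sub_rpow {a b t : ℝ} (ht : 0 < t) :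
    HasDerivAt (fun t : ℝ => t ^ (b - a) * exp (t ^ a - t ^ b))
      (t ^ (b - a - 1) * exp (t ^ a - t ^ b) * (b * (1 - t ^ b) - a * (1 - t ^ a))) t := by
  have hpow (c : ℝ) : t ^ (b - a) * t ^ (c - 1) = t ^ (b - a - 1) * t ^ c := by
    rw [← rpow_add ht, ← rpow_add ht]; ring_nf
  refine ((hasDerivAt_rpow_const (Or.inl ht.ne')).mul ((hasDerivAt_rpow_const (Or.inl ht.ne')).sub
    (hasDerivAt_rpow_const (Or.inl ht.ne'))).exp).congr_deriv ?_
  linear_combination exp (t ^ a - t ^ b) * (a * hpow a - b * hpow b)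

lemma strictMonoOn_rpow_sub_mul_exp_rpow_sub_rpow {a b : ℝ} (ha : 0 ≤ a) (hab : a < b) :
    StrictMonoOn (fun t : ℝ => t ^ (b - a) * exp (t ^ a - t ^ b)) (Icc 0 1) := by
  have hcont (c : ℝ) (hc : 0 ≤ c) : Continuous fun t : ℝ => t ^ c := continuous_rpow_const hc
  refine strictMonoOn_of_deriv_pos (convex_Icc 0 1) ?_ fun t ht => ?_
  · exact ((hcont _ (sub_nonneg.2 hab.le)).mul
      (((hcont a ha).sub (hcont b (ha.trans hab.le))).rexp)).continuousOn
  rw [interior_Icc] at ht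
  rw [(hasDerivAt_rpow_sub_mul_exp_rpow_sub_rpow ht.1).deriv]
  have hfactor : 0 < b * (1 - t ^ b) - a * (1 - t ^ a) :=
    sub_pos.2 (mul_one_sub_rpow_lt_mul_one_sub_rpow ha hab ht.1 ht.2)
  have ht₀ := ht.1
  positivity

lemma mapsTo_neg_log_Ioo_inv_exp_one : MapsTo (fun x => -log x) (Ioo (1 / exp 1) 1) (Icc 0 1) := by
  intro x ⟨hex, hx1⟩
  have hx0 : 0 < x := (by positivity : (0 : ℝ) < 1 / exp 1).trans hex
  have hlog : log (1 / exp 1) < log x := log_lt_log (by positivity) hex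
  rw [one_div, log_inv, log_exp] at hlog
  exact ⟨by linarith [log_neg hx0 hx1], by linarith⟩

theorem g_strictAnti_general (α₁ α₂ : ℝ) (h₀ : 0 < α₁) (h₁₂ : α₁ < α₂) :
    StrictAntiOn
      (fun x : ℝ => (-Real.log x) ^ (α₂ - α₁) *
        Real.exp ((-Real.log x) ^ α₁ - (-Real.log x) ^ α₂))
      (Set.Ioo (1 / Real.exp 1) 1) := by
  have hnegLog : StrictAntiOn (fun x => -log x) (Ioo (1 / exp 1) 1) := fun x hx y _ hxy =>
    neg_lt_neg (log_lt_log ((by positivity : (0 : ℝ) < 1 / exp 1).trans hx.1) hxy)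
  exact (strictMonoOn_rpow_sub_mul_exp_rpow_sub_rpow h₀.le h₁₂).comp_strictAntiOn hnegLog
    mapsTo_neg_log_Ioo_inv_exp_one

/-- For `0 < α₁ < α₂ < 1`, the function
`g x = (-log x)^(α₂-α₁) * exp ((-log x)^α₁ - (-log x)^α₂)` is strictly decreasing
on the interval `(1/e, 1)`. -/
theorem g_strictAnti (α₁ α₂ : ℝ) (h₀ : 0 < α₁) (h₁₂ : α₁ < α₂) (h₂ : α₂ < 1) :
    StrictAntiOn
      (fun x : ℝ => (-Real.log x) ^ (α₂ - α₁) *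
        Real.exp ((-Real.log x) ^ α₁ - (-Real.log x) ^ α₂))
      (Set.Ioo (1 / Real.exp 1) 1) :=
  g_strictAnti_general α₁ α₂ h₀ h₁₂
end

section
/- Let w : [0,1] → ℝ be continuously differentiable on an interval, with w' strictly increasing and twice differentiable on (m,1), satisfying w''(x)/w'(x) < 1/(1-x) and w'(x), w''(x) > 0 for x ∈ (m,1). For d > 0 let X(d) ∈ (m,1) satisfy w'(X(d)) = d·c/L for constants c, L > 0. Then the function φ(d) = d·(1 - X(d)) is strictly decreasing in d (on the range of d for which X(d) is defined). -/
/-! With `g x = w' x * (1 - x)`, the curvature condition says exactly that `g' = w'' (1 - x) - w' < 0`,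
so `g` is strictly decreasing on `(m, 1)`. As `w'` is strictly increasing, `X` is increasing in `d`,
hence `(c / L) φ(d) = g (X d)` decreases. -/

open Set

theorem strictAntiOn_mul_one_sub {f f' : ℝ → ℝ} {a b : ℝ}
    (hf : ∀ x ∈ Ioo a b, HasDerivAt f (f' x) x)
    (hlt : ∀ x ∈ Ioo a b, f' x * (1 - x) < f x) :
    StrictAntiOn (fun x => f x * (1 - x)) (Ioo a b) := by
  have hg : ∀ x ∈ Ioo a b, HasDerivAt (fun x => f x * (1 - x)) (f' x * (1 - x) - f x) x :=
    fun x hx => ((hf x hx).fun_mul ((hasDerivAt_id' x).const_sub 1)).congr_deriv (by ring)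
  refine strictAntiOn_of_deriv_neg (convex_Ioo a b)
    (fun x hx => (hg x hx).continuousAt.continuousWithinAt) fun x hx => ?_
  rw [interior_Ioo] at hx
  rw [(hg x hx).deriv]
  linarith [hlt x hx]

theorem mul_one_sub_lt_of_div_lt_one_div {y z x : ℝ} (hy : 0 < y) (hx : x < 1)
    (h : z / y < 1 / (1 - x)) : z * (1 - x) < y := by
  rwa [div_lt_div_iff₀ hy (sub_pos.mpr hx), one_mul] at h

theorem phi_strictAnti_general (w' w'' : ℝ → ℝ) (m c L : ℝ)
    (hc : 0 < c) (hL : 0 < L)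
    (hderiv : ∀ x ∈ Set.Ioo m 1, HasDerivAt w' (w'' x) x)
    (hw'pos : ∀ x ∈ Set.Ioo m 1, 0 < w' x)
    (hcurv : ∀ x ∈ Set.Ioo m 1, w'' x / w' x < 1 / (1 - x))
    (hmono : StrictMonoOn w' (Set.Ioo m 1))
    (D : Set ℝ)
    (X : ℝ → ℝ)
    (hX : ∀ d ∈ D, X d ∈ Set.Ioo m 1 ∧ w' (X d) = d * c / L) :
    StrictAntiOn (fun d => d * (1 - X d)) D := by
  have hg : StrictAntiOn (fun x => w' x * (1 - x)) (Ioo m 1) :=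
    strictAntiOn_mul_one_sub hderiv fun x hx =>
      mul_one_sub_lt_of_div_lt_one_div (hw'pos x hx) hx.2 (hcurv x hx)
  intro d₁ hd₁ d₂ hd₂ hlt
  obtain ⟨hX₁, hw₁⟩ := hX d₁ hd₁
  obtain ⟨hX₂, hw₂⟩ := hX d₂ hd₂
  have hcL : 0 < c / L := div_pos hc hL
  have hXlt : X d₁ < X d₂ := by
    rw [← hmono.lt_iff_lt hX₁ hX₂, hw₁, hw₂, mul_div_assoc, mul_div_assoc]
    exact mul_lt_mul_of_pos_right hlt hcL
  have key := hg hX₁ hX₂ hXlt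
  simp only [hw₁, hw₂, mul_div_assoc, mul_right_comm _ (c / L)] at key
  exact lt_of_mul_lt_mul_right key hcL.le

/-- Under the curvature condition `w''/w' < 1/(1-x)` on `(m,1)` (with `w', w'' > 0`
and `w'` strictly increasing there), the function `φ(d) = d * (1 - X d)` is strictly
decreasing in `d`, where `X d ∈ (m,1)` is defined by the first-order condition
`w'(X d) = d * c / L`. -/
theorem phi_strictAnti (w' w'' : ℝ → ℝ) (m c L : ℝ) (hm : m ∈ Set.Ioo (0 : ℝ) 1)
    (hc : 0 < c) (hL : 0 < L)
    (hderiv : ∀ x ∈ Set.Ioo m 1, HasDerivAt w' (w'' x) x)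
    (hw'pos : ∀ x ∈ Set.Ioo m 1, 0 < w' x)
    (hw''pos : ∀ x ∈ Set.Ioo m 1, 0 < w'' x)
    (hcurv : ∀ x ∈ Set.Ioo m 1, w'' x / w' x < 1 / (1 - x))
    (hmono : StrictMonoOn w' (Set.Ioo m 1))
    (D : Set ℝ) (hD : D ⊆ Set.Ioi (0 : ℝ))
    (X : ℝ → ℝ)
    (hX : ∀ d ∈ D, X d ∈ Set.Ioo m 1 ∧ w' (X d) = d * c / L) :
    StrictAntiOn (fun d => d * (1 - X d)) D :=
  phi_strictAnti_general w' w'' m c L hc hL hderiv hw'pos hcurv hmono D X hX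
end

section
/- In a Weakest Link game on a connected graph with homogeneous players, every pure Nash equilibrium has all nodes making identical investments. Precisely: if each player's utility is u(sᵢ, s_{N(i)}) = -L·w(1 - min_{j ∈ N̄(i)} sⱼ) - c·sᵢ with c > 0, and s* is a pure Nash equilibrium, then sᵢ* = sⱼ* for all nodes i, j. -/
/-!
Lowering one's investment to the minimum of one's closed neighbourhood leaves that minimum, hence
the attack probability, unchanged and saves cost `c > 0`; so at an equilibrium each investment
equals its closed-neighbourhood minimum. Then adjacent investments are mutually `≤`, hence equal,
and equality propagates along walks of the connected graph.
-/

open Finset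

theorem Finset.inf'_update_inf' {ι α : Type*} [DecidableEq ι] [SemilatticeInf α] {t : Finset ι}
    (ht : t.Nonempty) {i : ι} (hi : i ∈ t) (s : ι → α) :
    t.inf' ht (Function.update s i (t.inf' ht s)) = t.inf' ht s := by
  refine le_antisymm ?_ (le_inf' _ _ fun j hj => ?_)
  · simpa using inf'_le (Function.update s i (t.inf' ht s)) hi
  · rcases eq_or_ne j i with rfl | hji
    · simp
    · simpa [Function.update_of_ne hji] using inf'_le s hj

theorem Finset.eq_inf'_of_payoff_update_inf'_le {ι : Type*} [DecidableEq ι] {t : Finset ι}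
    (ht : t.Nonempty) {i : ι} (hi : i ∈ t) (φ : ℝ → ℝ) {c : ℝ} (hc : 0 < c) (s : ι → ℝ)
    (h : φ (t.inf' ht (Function.update s i (t.inf' ht s))) - c * t.inf' ht s ≤
      φ (t.inf' ht s) - c * s i) :
    s i = t.inf' ht s := by
  rw [inf'_update_inf' ht hi] at h
  have : s i ≤ t.inf' ht s := le_of_mul_le_mul_left (by linarith) hc
  exact this.antisymm (inf'_le s hi)

theorem SimpleGraph.Reachable.apply_eq_of_adj {V β : Type*} {G : SimpleGraph V} {f : V → β}
    (hf : ∀ a b, G.Adj a b → f a = f b) {a b : V} (h : G.Reachable a b) : f a = f b := by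
  obtain ⟨p⟩ := h
  induction p with
  | nil => rfl
  | cons hadj _ ih => exact (hf _ _ hadj).trans ih

theorem weakest_link_identical_general (n : ℕ) (G : SimpleGraph (Fin n)) [DecidableRel G.Adj]
    (hconn : G.Connected)
    (w : ℝ → ℝ) (c L : ℝ) (hc : 0 < c)
    (u : Fin n → (Fin n → ℝ) → ℝ)
    (hu : ∀ i (s : Fin n → ℝ),
      u i s = -L * w (1 - (insert i (G.neighborFinset i)).inf'
        (insert_nonempty i (G.neighborFinset i)) s) - c * s i)
    (s : Fin n → ℝ) (hs : ∀ i, s i ∈ Set.Icc (0 : ℝ) 1)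
    (hpne : ∀ i, ∀ si ∈ Set.Icc (0 : ℝ) 1, u i (Function.update s i si) ≤ u i s) :
    ∀ i j, s i = s j := by
  have hmin : ∀ i, s i = (insert i (G.neighborFinset i)).inf'
      (insert_nonempty i (G.neighborFinset i)) s := fun i => by
    obtain ⟨j, -, hj⟩ := exists_mem_eq_inf' (insert_nonempty i (G.neighborFinset i)) s
    refine eq_inf'_of_payoff_update_inf'_le _ (mem_insert_self i _)
      (fun x => -L * w (1 - x)) hc s ?_
    simpa only [hu, Function.update_self] using hpne i _ (hj ▸ hs j)
  have hle : ∀ a b, G.Adj a b → s a ≤ s b := fun a b hab =>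
    (hmin a).trans_le (inf'_le s (mem_insert_of_mem ((G.mem_neighborFinset a b).2 hab)))
  exact fun i j =>
    (hconn i j).apply_eq_of_adj fun a b hab => (hle a b hab).antisymm (hle b a hab.symm)

/-- In a Weakest Link game on a connected graph with homogeneous players, every
pure Nash equilibrium has all nodes making identical investments. -/
theorem weakest_link_identical (n : ℕ) (G : SimpleGraph (Fin n)) [DecidableRel G.Adj]
    (hconn : G.Connected)
    (w : ℝ → ℝ) (c L : ℝ) (hc : 0 < c) (hL : 0 < L)
    (u : Fin n → (Fin n → ℝ) → ℝ)
    (hu : ∀ i (s : Fin n → ℝ),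
      u i s = -L * w (1 - (insert i (G.neighborFinset i)).inf'
        (insert_nonempty i (G.neighborFinset i)) s) - c * s i)
    (s : Fin n → ℝ) (hs : ∀ i, s i ∈ Set.Icc (0 : ℝ) 1)
    (hpne : ∀ i, ∀ si ∈ Set.Icc (0 : ℝ) 1, u i (Function.update s i si) ≤ u i s) :
    ∀ i j, s i = s j :=
  weakest_link_identical_general n G hconn w c L hc u hu s hs hpne
end
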